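/- For the stability function R(z) = det(I − zA + z·𝟙bᵀ)/det(I − zA) of the implicit ARK2 component with χ = 2 − √2, one has R(z) → 0 as z → −∞ (i.e., the method is L-stable at infinity along the real axis). -/

import Mathlib

/-!
Both diagonal entries of the implicit tableau below the explicit first stage equal
`γ = χ / 2 = 1 - 1/√2`, so `det (I - zA) = (1 - γz)²`, while the numerator of the stability
function collapses to the linear polynomial `1 + (√2 - 1) z`. A rational function whose
denominator has larger degree than its numerator vanishes at infinity.
-/

open Filter Topology Matrix

noncomputable def rkStabilityFunction {n : ℕ} (A : Matrix (Fin n) (Fin n) ℝ) (b : Fin n → ℝ)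
    (z : ℝ) : ℝ :=
  det (1 - z • A + z • vecMulVec (fun _ => 1) b) / det (1 - z • A)

theorem tendsto_linear_div_sq_atBot {a b c : ℝ} (hc : c ≠ 0) :
    Tendsto (fun z => (a + b * z) / (1 - c * z) ^ 2) atBot (𝓝 0) := by
  -- substitute `u = z⁻¹`, which makes the function continuous at `u = 0`
  set g : ℝ → ℝ := fun u => (a * u ^ 2 + b * u) / (u - c) ^ 2
  have hg : Tendsto g (𝓝 0) (𝓝 0) := by
    have hcont : ContinuousAt g 0 :=
      ContinuousAt.div (by fun_prop) (by fun_prop) (by simpa [sub_eq_zero] using hc)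
    simpa [g] using hcont.tendsto
  refine (hg.comp tendsto_inv_atBot_zero).congr' ?_
  filter_upwards [eventually_lt_atBot (0 : ℝ)] with z hz
  have hz0 : z ≠ 0 := hz.ne
  simp only [Function.comp_apply, g]
  field_simp

noncomputable def implicitARK2Chi : ℝ := 2 - Real.sqrt 2

noncomputable def implicitARK2A : Matrix (Fin 3) (Fin 3) ℝ :=
  !![0, 0, 0;
     implicitARK2Chi/2, implicitARK2Chi/2, 0;
     1/(2*Real.sqrt 2), 1/(2*Real.sqrt 2), 1 - 1/Real.sqrt 2]

noncomputable def implicitARK2b : Fin 3 → ℝ :=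
  ![1/2 - implicitARK2Chi/4, 1/2 - implicitARK2Chi/4, implicitARK2Chi/2]

theorem det_one_sub_smul_implicitARK2A (z : ℝ) :
    det (1 - z • implicitARK2A) = (1 - (1 - Real.sqrt 2 / 2) * z) ^ 2 := by
  have hs : Real.sqrt 2 ^ 2 = 2 := Real.sq_sqrt (by norm_num)
  simp [det_fin_three, one_apply, implicitARK2A, implicitARK2Chi]
  field_simp
  linear_combination (-2*z + 2*z^2 - z^2*Real.sqrt 2) * hs

theorem det_stabilityNumerator_implicitARK2 (z : ℝ) :
    det (1 - z • implicitARK2A + z • vecMulVec (fun _ => 1) implicitARK2b) =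
      1 + (Real.sqrt 2 - 1) * z := by
  have hs : Real.sqrt 2 ^ 2 = 2 := Real.sq_sqrt (by norm_num)
  simp [det_fin_three, one_apply, implicitARK2A, implicitARK2b, implicitARK2Chi]
  field_simp
  linear_combination (-64*z - 32*z^2*Real.sqrt 2) * hs

theorem rkStabilityFunction_implicitARK2 (z : ℝ) :
    rkStabilityFunction implicitARK2A implicitARK2b z =
      (1 + (Real.sqrt 2 - 1) * z) / (1 - (1 - Real.sqrt 2 / 2) * z) ^ 2 := by
  rw [rkStabilityFunction, det_stabilityNumerator_implicitARK2, det_one_sub_smul_implicitARK2A]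

theorem implicit_ARK2_L_stable_at_infinity :
    let χ : ℝ := 2 - Real.sqrt 2
    let A : Matrix (Fin 3) (Fin 3) ℝ :=
      !![0, 0, 0;
         χ/2, χ/2, 0;
         1/(2*Real.sqrt 2), 1/(2*Real.sqrt 2), 1 - 1/Real.sqrt 2]
    let b : Fin 3 → ℝ := ![1/2 - χ/4, 1/2 - χ/4, χ/2]
    let R : ℝ → ℝ := fun z =>
      Matrix.det (1 - z • A + z • Matrix.vecMulVec (fun _ => 1) b) /
        Matrix.det (1 - z • A)
    Filter.Tendsto R Filter.atBot (nhds 0) := by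
  show Tendsto (rkStabilityFunction implicitARK2A implicitARK2b) atBot (𝓝 0)
  have hγ : 1 - Real.sqrt 2 / 2 ≠ 0 := by
    have : Real.sqrt 2 < 2 := by
      rw [Real.sqrt_lt' two_pos]
      norm_num
    linarith
  simpa only [funext rkStabilityFunction_implicitARK2] using tendsto_linear_div_sq_atBot hγ
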